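/- Let T and S be tables over disjoint attribute sets and let F = F' ∧ (x ∨ y) where predicate x depends only on attributes of S and y is an arbitrary predicate on joined tuples. Extend S to S' by adding a fresh boolean attribute p whose value on each tuple s of S is x(s) (propositional projection). Then σ_F(T ⋈ S) equals, after dropping the column p, σ_{F' ∧ (y ∨ (p = true))}(T ⋈ S'). -/

import Mathlib

theorem exists_bool_iff_and_or_eq_true (P Q : Prop) :
    (∃ b : Bool, (b = true ↔ P) ∧ (Q ∨ b = true)) ↔ P ∨ Q := by
  constructor
  · rintro ⟨b, hbP, hQ | hb⟩
    · exact Or.inr hQ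
    · exact Or.inl (hbP.mp hb)
  · intro hPQ
    classical
    exact ⟨decide P, decide_eq_true_iff, hPQ.symm.imp_right decide_eq_true⟩

theorem stmt5_general {α β V : Type*} (T : Set (α → V)) (S : Set (β → V))
    (F' y : (α → V) × (β → V) → Prop) (x : (β → V) → Prop) :
    {ts : (α → V) × (β → V) | ts ∈ T ×ˢ S ∧ (F' ts ∧ (x ts.2 ∨ y ts))} =
      (fun tsb : (α → V) × ((β → V) × Bool) => (tsb.1, tsb.2.1)) ''
        {tsb : (α → V) × ((β → V) × Bool) |
          tsb.1 ∈ T ∧ (tsb.2.1 ∈ S ∧ (tsb.2.2 = true ↔ x tsb.2.1)) ∧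
          (F' (tsb.1, tsb.2.1) ∧ (y (tsb.1, tsb.2.1) ∨ tsb.2.2 = true))} := by
  ext ts
  constructor
  · rintro ⟨⟨hT, hS⟩, hF, hxy⟩
    obtain ⟨b, hb, hyb⟩ := (exists_bool_iff_and_or_eq_true _ _).mpr hxy
    exact ⟨(ts.1, ts.2, b), ⟨hT, ⟨hS, hb⟩, hF, hyb⟩, rfl⟩
  · rintro ⟨⟨t, s, b⟩, ⟨hT, ⟨hS, hb⟩, hF, hyb⟩, rfl⟩
    exact ⟨⟨hT, hS⟩, hF, (exists_bool_iff_and_or_eq_true _ _).mp ⟨b, hb, hyb⟩⟩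

/-- Rewrite rule with a propositional projection: for tables `T`, `S` over
disjoint attribute sets (joined tuples modeled as pairs), and
`F = F' ∧ (x ∨ y)` where `x` depends only on attributes of `S`, extend `S` to
`S'` by a fresh boolean column `p` recording the truth value of `x`.  Then
`σ_F (T ⋈ S)` equals, after dropping the column `p`,
`σ_{F' ∧ (y ∨ p = true)} (T ⋈ S')`. -/
theorem stmt5 {α β V : Type*} (T : Set (α → V)) (S : Set (β → V))
    (hTfin : T.Finite) (hSfin : S.Finite)
    (F' y : (α → V) × (β → V) → Prop) (x : (β → V) → Prop) :
    {ts : (α → V) × (β → V) | ts ∈ T ×ˢ S ∧ (F' ts ∧ (x ts.2 ∨ y ts))} =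
      (fun tsb : (α → V) × ((β → V) × Bool) => (tsb.1, tsb.2.1)) ''
        {tsb : (α → V) × ((β → V) × Bool) |
          tsb.1 ∈ T ∧ (tsb.2.1 ∈ S ∧ (tsb.2.2 = true ↔ x tsb.2.1)) ∧
          (F' (tsb.1, tsb.2.1) ∧ (y (tsb.1, tsb.2.1) ∨ tsb.2.2 = true))} :=
  stmt5_general T S F' y x
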